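/- Let t = 2 and let g ∈ G^LP. If for every i ∈ {1,…,k} the vector g·x_i is NOT of the form ±(1/2)x_{a,b} ± (1/2)x_{a,c} ± (1/2)x_b ± (1/2)x_c for distinct a, b, c ∈ {1,…,k}, then for every x ∈ B the vector g·x is not of that form either. -/

import Mathlib

open scoped symmDiff


/-- The set of points of the 2-level full factorial design, `P = {-1,1}^k`,
with `{-1,1}` encoded as `ℤˣ`. -/
abbrev DesignPoint (k : ℕ) := Fin k → ℤˣ

/-- The vector `x_S ∈ ℚ^P` given by `(x_S)_p = ∏_{i ∈ S} p_i`.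
In particular `xvec k ∅` is the all-ones vector `𝟏`, `xvec k {i}` is the
`i`-th main effect and `xvec k {i,j}` is a two-factor interaction. -/
def xvec (k : ℕ) (S : Finset (Fin k)) (p : DesignPoint k) : ℚ :=
  ∏ i ∈ S, ((p i : ℤ) : ℚ)

/-- The linear action of a permutation of the points on `ℚ^P`: `(π·v)_p = v_{π⁻¹(p)}`. -/
def permVec (k : ℕ) (π : Equiv.Perm (DesignPoint k)) (v : DesignPoint k → ℚ) :
    DesignPoint k → ℚ :=
  fun p => v (π⁻¹ p)

/-- The LP-relaxation feasible set `F` of the OA(N,k,2,t)-defining ILP,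
written in terms of J-characteristics: `f ≥ 0`, `𝟏ᵀf = N`, and `x_Sᵀf = 0`
for all nonempty `S` with `|S| ≤ t`. -/
def feas (k N t : ℕ) : Set (DesignPoint k → ℚ) :=
  {f | (∀ p, 0 ≤ f p) ∧ (∑ p, f p = (N : ℚ)) ∧
    ∀ S : Finset (Fin k), S ≠ ∅ → S.card ≤ t → ∑ p, xvec k S p * f p = 0}

/-- The LP relaxation permutation symmetry group `G^LP`: all permutations of
the points whose induced linear action maps `F` into itself. -/
def GLP (k N t : ℕ) : Set (Equiv.Perm (DesignPoint k)) :=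
  {π | ∀ f ∈ feas k N t, permVec k π f ∈ feas k N t}

/-- `v` is of the special form `±(1/2)x_{a,b} ± (1/2)x_{a,c} ± (1/2)x_b ± (1/2)x_c`
for some distinct `a, b, c ∈ {1,…,k}` and some choice of signs. -/
def specialForm (k : ℕ) (v : DesignPoint k → ℚ) : Prop :=
  ∃ a b c : Fin k, a ≠ b ∧ a ≠ c ∧ b ≠ c ∧
    ∃ e₁ e₂ e₃ e₄ : ℚ,
      (e₁ = 1/2 ∨ e₁ = -(1/2)) ∧ (e₂ = 1/2 ∨ e₂ = -(1/2)) ∧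
      (e₃ = 1/2 ∨ e₃ = -(1/2)) ∧ (e₄ = 1/2 ∨ e₄ = -(1/2)) ∧
      v = fun p => e₁ * xvec k {a, b} p + e₂ * xvec k {a, c} p
        + e₃ * xvec k {b} p + e₄ * xvec k {c} p

lemma cast_unit_sq (u : ℤˣ) : ((u:ℤ):ℚ) * ((u:ℤ):ℚ) = 1 := by
  rcases Int.units_eq_one_or u with h | h <;> simp [h]

lemma cast_unit_pm (u : ℤˣ) : ((u:ℤ):ℚ) = 1 ∨ ((u:ℤ):ℚ) = -1 := by
  rcases Int.units_eq_one_or u with h | h <;> simp [h]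

lemma card_dp (k : ℕ) : Fintype.card (DesignPoint k) = 2 ^ k := by
  rw [Fintype.card_fun]; norm_num

lemma sum_one (k : ℕ) : ∑ _p : DesignPoint k, (1:ℚ) = 2 ^ k := by
  rw [Finset.sum_const, Finset.card_univ, card_dp]; push_cast; ring

/-- flip equiv at coordinate i -/
def flipE (k : ℕ) (i : Fin k) : Equiv.Perm (DesignPoint k) where
  toFun p := Function.update p i (-(p i))
  invFun p := Function.update p i (-(p i))
  left_inv p := by
    funext j
    by_cases h : j = i
    · subst h; simp
    · simp [Function.update_of_ne h]
  right_inv p := by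
    funext j
    by_cases h : j = i
    · subst h; simp
    · simp [Function.update_of_ne h]

lemma xvec_flip (k : ℕ) (S : Finset (Fin k)) (i : Fin k) (hi : i ∈ S) (p : DesignPoint k) :
    xvec k S (flipE k i p) = - xvec k S p := by
  unfold xvec
  rw [← Finset.mul_prod_erase S _ hi, ← Finset.mul_prod_erase S (fun j => ((p j : ℤ):ℚ)) hi]
  have h1 : ((flipE k i p i : ℤ) : ℚ) = -((p i : ℤ) : ℚ) := by
    simp [flipE]
  have h2 : ∀ j ∈ S.erase i, ((flipE k i p j : ℤ) : ℚ) = ((p j : ℤ) : ℚ) := by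
    intro j hj
    have : j ≠ i := Finset.ne_of_mem_erase hj
    simp [flipE, Function.update_of_ne this]
  rw [h1, Finset.prod_congr rfl h2]; ring

lemma sum_xvec (k : ℕ) (S : Finset (Fin k)) (hS : S ≠ ∅) :
    ∑ p : DesignPoint k, xvec k S p = 0 := by
  obtain ⟨i, hi⟩ := Finset.nonempty_iff_ne_empty.mpr hS
  have h : ∑ p : DesignPoint k, xvec k S (flipE k i p) = ∑ p : DesignPoint k, xvec k S p :=
    Equiv.sum_comp (flipE k i) (fun p => xvec k S p)
  have h2 : ∑ p : DesignPoint k, xvec k S (flipE k i p) = - ∑ p : DesignPoint k, xvec k S p := by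
    rw [Finset.sum_congr rfl fun p _ => xvec_flip k S i hi p, Finset.sum_neg_distrib]
  have := h.symm.trans h2
  linarith

lemma xvec_mul (k : ℕ) (S T : Finset (Fin k)) (p : DesignPoint k) :
    xvec k S p * xvec k T p = xvec k (S ∆ T) p := by
  unfold xvec
  have h1 : (∏ i ∈ S ∪ T, ((p i : ℤ):ℚ)) * ∏ i ∈ S ∩ T, ((p i : ℤ):ℚ)
      = (∏ i ∈ S, ((p i : ℤ):ℚ)) * ∏ i ∈ T, ((p i : ℤ):ℚ) :=
    Finset.prod_union_inter
  have h2 : S ∪ T = (S ∆ T) ∪ (S ∩ T) := by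
    ext x; simp [Finset.mem_symmDiff]; tauto
  have h3 : Disjoint (S ∆ T) (S ∩ T) := by
    rw [Finset.disjoint_left]; intro x hx hx2
    simp [Finset.mem_symmDiff] at hx
    simp at hx2
    tauto
  rw [h2, Finset.prod_union h3] at h1
  have h4 : (∏ i ∈ S ∩ T, ((p i : ℤ):ℚ)) * ∏ i ∈ S ∩ T, ((p i : ℤ):ℚ) = 1 := by
    rw [← Finset.prod_mul_distrib]
    exact Finset.prod_eq_one fun i _ => cast_unit_sq (p i)
  calc (∏ i ∈ S, ((p i : ℤ):ℚ)) * ∏ i ∈ T, ((p i : ℤ):ℚ)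
      = ((∏ i ∈ S ∆ T, ((p i : ℤ):ℚ)) * ∏ i ∈ S ∩ T, ((p i : ℤ):ℚ)) * ∏ i ∈ S ∩ T, ((p i : ℤ):ℚ) := by rw [h1]
    _ = ∏ i ∈ S ∆ T, ((p i : ℤ):ℚ) := by rw [mul_assoc, h4, mul_one]

lemma xvec_orth (k : ℕ) (S T : Finset (Fin k)) :
    ∑ p : DesignPoint k, xvec k S p * xvec k T p = if S = T then (2:ℚ)^k else 0 := by
  by_cases h : S = T
  · subst h
    simp only [if_pos rfl]
    have : ∀ p : DesignPoint k, xvec k S p * xvec k S p = 1 := by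
      intro p; unfold xvec; rw [← Finset.prod_mul_distrib]
      exact Finset.prod_eq_one fun i _ => cast_unit_sq (p i)
    rw [Finset.sum_congr rfl fun p _ => this p]; exact sum_one k
  · rw [if_neg h]
    have hd : S ∆ T ≠ ∅ := by
      intro hc
      exact h (by simpa [symmDiff_eq_bot] using hc)
    rw [Finset.sum_congr rfl fun p _ => xvec_mul k S T p]
    exact sum_xvec k _ hd

-- kernel
lemma xvec_kernel (k : ℕ) (p q : DesignPoint k) :
    ∑ S : Finset (Fin k), xvec k S q * xvec k S p = if p = q then (2:ℚ)^k else 0 := by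
  have hexp : ∑ S : Finset (Fin k), xvec k S q * xvec k S p
      = ∏ i : Fin k, (((q i : ℤ):ℚ) * ((p i : ℤ):ℚ) + 1) := by
    rw [Finset.prod_add]
    rw [← Finset.powerset_univ]
    refine (Finset.sum_congr rfl fun S _ => ?_).symm
    rw [Finset.prod_const_one, mul_one]
    unfold xvec
    rw [← Finset.prod_mul_distrib]
  rw [hexp]
  by_cases h : p = q
  · subst h
    rw [if_pos rfl]
    rw [Finset.prod_congr rfl fun i _ => by rw [cast_unit_sq (p i)]]
    norm_num
  · rw [if_neg h]
    have : ∃ i, p i ≠ q i := by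
      by_contra hc
      push_neg at hc
      exact h (funext hc)
    obtain ⟨i, hi⟩ := this
    apply Finset.prod_eq_zero (Finset.mem_univ i)
    rcases Int.units_eq_one_or (p i) with h1 | h1 <;>
      rcases Int.units_eq_one_or (q i) with h2 | h2 <;>
      simp [h1, h2] at hi ⊢ <;> first | rfl | (exfalso; exact hi (by rw [h1, h2]))

lemma two_pow_ne (k : ℕ): ((2:ℚ)^k) ≠ 0 := by positivity

-- M1 expansion
lemma expansion (k : ℕ) (u : DesignPoint k → ℚ) (p : DesignPoint k) :
    u p = ((2:ℚ)^k)⁻¹ * ∑ S : Finset (Fin k), (∑ q, xvec k S q * u q) * xvec k S p := by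
  have h : ∑ S : Finset (Fin k), (∑ q, xvec k S q * u q) * xvec k S p
      = ∑ q, (∑ S : Finset (Fin k), xvec k S q * xvec k S p) * u q := by
    calc ∑ S : Finset (Fin k), (∑ q, xvec k S q * u q) * xvec k S p
        = ∑ S : Finset (Fin k), ∑ q, xvec k S q * u q * xvec k S p := by
          exact Finset.sum_congr rfl fun S _ => Finset.sum_mul _ _ _
      _ = ∑ q, ∑ S : Finset (Fin k), xvec k S q * u q * xvec k S p := Finset.sum_comm
      _ = ∑ q, (∑ S : Finset (Fin k), xvec k S q * xvec k S p) * u q := by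
          refine Finset.sum_congr rfl fun q _ => ?_
          rw [Finset.sum_mul]
          exact Finset.sum_congr rfl fun S _ => by ring
  rw [h]
  rw [Finset.sum_congr rfl fun q _ => by rw [xvec_kernel k p q]]
  simp [ite_mul, zero_mul, Finset.sum_ite_eq, two_pow_ne k]
-- M2 evaluation
lemma evaluation (k : ℕ) (d : Finset (Fin k) → ℚ) (T : Finset (Fin k)) :
    ∑ p, xvec k T p * (((2:ℚ)^k)⁻¹ * ∑ S : Finset (Fin k), d S * xvec k S p) = d T := by
  have h : ∀ p, xvec k T p * (((2:ℚ)^k)⁻¹ * ∑ S : Finset (Fin k), d S * xvec k S p)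
      = ((2:ℚ)^k)⁻¹ * ∑ S : Finset (Fin k), d S * (xvec k S p * xvec k T p) := by
    intro p
    rw [Finset.mul_sum, Finset.mul_sum, Finset.mul_sum]
    refine Finset.sum_congr rfl fun S _ => ?_
    ring
  rw [Finset.sum_congr rfl fun p _ => h p, ← Finset.mul_sum, Finset.sum_comm]
  have h2 : ∀ S, ∑ p, d S * (xvec k S p * xvec k T p) = d S * (if S = T then (2:ℚ)^k else 0) := by
    intro S
    rw [← Finset.mul_sum, xvec_orth]
  rw [Finset.sum_congr rfl fun S _ => h2 S]
  simp [mul_ite, mul_zero, Finset.sum_ite_eq', two_pow_ne k]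
  field_simp

lemma xvec_neg (k : ℕ) (S : Finset (Fin k)) (p : DesignPoint k) :
    xvec k S (-p) = (-1)^S.card * xvec k S p := by
  unfold xvec
  rw [← Finset.prod_const, ← Finset.prod_mul_distrib]
  refine Finset.prod_congr rfl fun i _ => ?_
  have : (-p) i = -(p i) := rfl
  rw [this]
  push_cast
  ring

lemma linear_classify (k : ℕ) (α : Fin k → ℚ)
    (h : ∀ p : DesignPoint k, (∑ m, α m * ((p m : ℤ) : ℚ)) = 0 ∨
      (∑ m, α m * ((p m : ℤ) : ℚ)) = 1 ∨ (∑ m, α m * ((p m : ℤ) : ℚ)) = -1) :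
    (∀ m, α m = 0) ∨
    (∃ m, (α m = 1 ∨ α m = -1) ∧ ∀ n, n ≠ m → α n = 0) ∨
    (∃ b c, b ≠ c ∧ (α b = 1/2 ∨ α b = -(1/2)) ∧ (α c = 1/2 ∨ α c = -(1/2)) ∧
      ∀ n, n ≠ b → n ≠ c → α n = 0) := by
  classical
  set P : DesignPoint k := fun m => if 0 ≤ α m then 1 else -1 with hP
  have hPv : ∀ m, α m * ((P m : ℤ) : ℚ) = |α m| := by
    intro m
    by_cases hm : 0 ≤ α m
    · simp [hP, hm, abs_of_nonneg hm]
    · push_neg at hm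
      simp [hP, not_le.mpr hm, abs_of_neg hm]
  have hS : ∑ m, α m * ((P m : ℤ) : ℚ) = ∑ m, |α m| := Finset.sum_congr rfl fun m _ => hPv m
  have hSnn : 0 ≤ ∑ m, |α m| := Finset.sum_nonneg fun m _ => abs_nonneg _
  rcases h P with h0 | h1 | hm1
  · -- sum of abs = 0
    left
    rw [hS] at h0
    intro m
    have := (Finset.sum_eq_zero_iff_of_nonneg (fun m _ => abs_nonneg (α m))).mp h0 m (Finset.mem_univ m)
    exact abs_eq_zero.mp this
  swap
  · exfalso; rw [hS] at hm1; linarith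
  · -- sum of abs = 1
    rw [hS] at h1
    right
    -- each |α m| ∈ {0, 1/2, 1}
    have hval : ∀ m, |α m| = 0 ∨ |α m| = 1/2 ∨ |α m| = 1 := by
      intro m
      set Q : DesignPoint k := Function.update P m (-(P m)) with hQ
      have hQv : ∑ n, α n * ((Q n : ℤ) : ℚ) = 1 - 2 * |α m| := by
        have hsplit : ∀ n, α n * ((Q n : ℤ) : ℚ)
            = α n * ((P n : ℤ) : ℚ) - (if n = m then 2 * |α m| else 0) := by
          intro n
          by_cases hn : n = m
          · subst hn
            rw [hQ]
            simp only [Function.update_self, if_pos rfl]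
            have : ((-(P n) : ℤˣ) : ℤ) = -((P n : ℤ)) := Units.val_neg _
            rw [this]
            push_cast
            have := hPv n
            nlinarith [hPv n]
          · rw [hQ, Function.update_of_ne hn, if_neg hn]
            ring
        rw [Finset.sum_congr rfl fun n _ => hsplit n, Finset.sum_sub_distrib, hS]
        rw [Finset.sum_ite_eq' Finset.univ m (fun _ => 2*|α m|)]
        simp [h1]
      rcases h Q with q0 | q1 | qm1 <;> rw [hQv] at * <;>
        [ (right; left; linarith) ; (left; linarith) ; (right; right; linarith) ]
    by_cases hbig : ∃ m, |α m| = 1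
    · left
      obtain ⟨m, hm⟩ := hbig
      refine ⟨m, abs_eq (by norm_num : (0:ℚ) ≤ 1) |>.mp hm, ?_⟩
      intro n hn
      have hrest : ∑ x ∈ Finset.univ.erase m, |α x| = 0 := by
        have h2 := Finset.add_sum_erase Finset.univ (fun x => |α x|) (Finset.mem_univ m)
        rw [← h2] at h1
        linarith
      have := (Finset.sum_eq_zero_iff_of_nonneg (fun x _ => abs_nonneg (α x))).mp hrest n
        (Finset.mem_erase.mpr ⟨hn, Finset.mem_univ n⟩)
      exact abs_eq_zero.mp this
    · right
      push_neg at hbig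
      -- all nonzero have abs 1/2 ; support has card 2
      set T : Finset (Fin k) := Finset.univ.filter (fun m => α m ≠ 0) with hT
      have habs : ∀ m ∈ T, |α m| = 1/2 := by
        intro m hm
        rcases hval m with h' | h' | h'
        · exfalso; exact (Finset.mem_filter.mp hm).2 (abs_eq_zero.mp h')
        · exact h'
        · exact absurd h' (hbig m)
      have hsum : ∑ m ∈ T, |α m| = 1 := by
        rw [← h1]
        apply Finset.sum_subset (Finset.filter_subset _ _)
        intro x _ hx
        rw [Finset.mem_filter] at hx
        push_neg at hx
        simp [abs_eq_zero.mpr (hx (Finset.mem_univ x))]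
      have hcard : T.card = 2 := by
        rw [Finset.sum_congr rfl habs, Finset.sum_const] at hsum
        have : (T.card : ℚ) = 2 := by
          rw [nsmul_eq_mul] at hsum
          linarith
        exact_mod_cast this
      obtain ⟨b, c, hbc, hTbc⟩ := Finset.card_eq_two.mp hcard
      have hb : b ∈ T := by rw [hTbc]; simp
      have hc : c ∈ T := by rw [hTbc]; simp
      refine ⟨b, c, hbc, abs_eq (by norm_num : (0:ℚ) ≤ 1/2) |>.mp (habs b hb),
        abs_eq (by norm_num : (0:ℚ) ≤ 1/2) |>.mp (habs c hc), ?_⟩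
      intro n hnb hnc
      by_contra hn0
      have : n ∈ T := Finset.mem_filter.mpr ⟨Finset.mem_univ n, hn0⟩
      rw [hTbc] at this
      simp at this
      tauto

lemma parity_exp (k : ℕ) (u : DesignPoint k → ℚ)
    (hsupp : ∀ S : Finset (Fin k), (S = ∅ ∨ 3 ≤ S.card) → ∑ p, xvec k S p * u p = 0) :
    (∀ p, (u p - u (-p))/2
      = ((2:ℚ)^k)⁻¹ * ∑ S : Finset (Fin k), (if S.card = 1 then (∑ q, xvec k S q * u q) else 0) * xvec k S p)
    ∧ (∀ p, (u p + u (-p))/2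
      = ((2:ℚ)^k)⁻¹ * ∑ S : Finset (Fin k), (if S.card = 2 then (∑ q, xvec k S q * u q) else 0) * xvec k S p) := by
  have key : ∀ S : Finset (Fin k), ∀ p : DesignPoint k,
      ((∑ q, xvec k S q * u q) * xvec k S p - (∑ q, xvec k S q * u q) * xvec k S (-p))
        = 2 * ((if S.card = 1 then (∑ q, xvec k S q * u q) else 0) * xvec k S p) := by
    intro S p
    rw [xvec_neg]
    rcases Nat.even_or_odd S.card with he | ho
    · have h1 : ((-1:ℚ))^S.card = 1 := he.neg_one_pow
      have h2 : S.card ≠ 1 := by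
        intro hc; rw [hc] at he; exact (Nat.not_even_one) he
      rw [h1, if_neg h2]; ring
    · have h1 : ((-1:ℚ))^S.card = -1 := ho.neg_one_pow
      by_cases h2 : S.card = 1
      · rw [h1, if_pos h2]; ring
      · have h3 : 3 ≤ S.card := by
          obtain ⟨t, ht⟩ := ho
          omega
        rw [h1, if_neg h2, hsupp S (Or.inr h3)]; ring
  have key2 : ∀ S : Finset (Fin k), ∀ p : DesignPoint k,
      ((∑ q, xvec k S q * u q) * xvec k S p + (∑ q, xvec k S q * u q) * xvec k S (-p))
        = 2 * ((if S.card = 2 then (∑ q, xvec k S q * u q) else 0) * xvec k S p) := by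
    intro S p
    rw [xvec_neg]
    rcases Nat.even_or_odd S.card with he | ho
    · have h1 : ((-1:ℚ))^S.card = 1 := he.neg_one_pow
      by_cases h2 : S.card = 2
      · rw [h1, if_pos h2]; ring
      · have h3 : S = ∅ ∨ 3 ≤ S.card := by
          obtain ⟨t, ht⟩ := he
          by_cases h0 : S.card = 0
          · exact Or.inl (Finset.card_eq_zero.mp h0)
          · right; omega
        rw [h1, if_neg h2, hsupp S h3]; ring
    · have h1 : ((-1:ℚ))^S.card = -1 := ho.neg_one_pow
      have h2 : S.card ≠ 2 := by
        intro hc; rw [hc] at ho; exact (by decide : ¬ Odd 2) ho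
      rw [h1, if_neg h2]; ring
  constructor
  · intro p
    rw [expansion k u p, expansion k u (-p), ← mul_sub, ← Finset.sum_sub_distrib]
    rw [Finset.sum_congr rfl fun S _ => key S p, ← Finset.mul_sum]
    ring
  · intro p
    rw [expansion k u p, expansion k u (-p), ← mul_add, ← Finset.sum_add_distrib]
    rw [Finset.sum_congr rfl fun S _ => key2 S p, ← Finset.mul_sum]
    ring

lemma sum_card_one (k : ℕ) (f : Finset (Fin k) → ℚ) (p : DesignPoint k) :
    ∑ S : Finset (Fin k), (if S.card = 1 then f S else 0) * xvec k S p
      = ∑ m, f {m} * ((p m : ℤ) : ℚ) := by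
  classical
  rw [Finset.sum_congr rfl fun S _ => (ite_mul _ _ _ _ : (if S.card = 1 then f S else 0) * xvec k S p = if S.card = 1 then f S * xvec k S p else 0 * xvec k S p)]
  simp only [zero_mul]
  rw [← Finset.sum_filter]
  have himg : Finset.univ.filter (fun S : Finset (Fin k) => S.card = 1)
      = Finset.univ.image (fun m : Fin k => ({m} : Finset (Fin k))) := by
    ext S
    simp only [Finset.mem_filter, Finset.mem_univ, true_and, Finset.mem_image, Finset.card_eq_one]
    constructor
    · rintro ⟨a, ha⟩; exact ⟨a, ha.symm⟩
    · rintro ⟨a, ha⟩; exact ⟨a, ha.symm⟩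
  rw [himg, Finset.sum_image (fun x _ y _ hxy => Finset.singleton_injective hxy)]
  refine Finset.sum_congr rfl fun m _ => ?_
  unfold xvec
  rw [Finset.prod_singleton]

lemma sum_card_two (k : ℕ) (f : Finset (Fin k) → ℚ) (b c : Fin k) (hbc : b ≠ c)
    (hf1 : f {b, c} = 0)
    (hf2 : ∀ m n : Fin k, m ≠ n → m ≠ b → m ≠ c → n ≠ b → n ≠ c → f {m, n} = 0)
    (p : DesignPoint k) :
    ∑ S : Finset (Fin k), (if S.card = 2 then f S else 0) * xvec k S p
      = ∑ m ∈ Finset.univ.filter (fun m => ¬(m = b ∨ m = c)),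
          (f {m, b} * (((p m : ℤ):ℚ) * ((p b : ℤ):ℚ)) + f {m, c} * (((p m : ℤ):ℚ) * ((p c : ℤ):ℚ))) := by
  classical
  set M : Finset (Fin k) := Finset.univ.filter (fun m => ¬(m = b ∨ m = c)) with hM
  have hmemM : ∀ m : Fin k, m ∈ M ↔ (m ≠ b ∧ m ≠ c) := by
    intro m; simp [hM, Finset.mem_filter, not_or]
  set D : Finset (Finset (Fin k)) :=
    M.image (fun m => ({m, b} : Finset (Fin k))) ∪ M.image (fun m => ({m, c} : Finset (Fin k))) with hD
  have hcard1 : ∀ m, m ≠ b → (({m, b} : Finset (Fin k)).card = 2) := by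
    intro m hm; rw [Finset.card_pair hm]
  have hcard2 : ∀ m, m ≠ c → (({m, c} : Finset (Fin k)).card = 2) := by
    intro m hm; rw [Finset.card_pair hm]
  have step1 : ∑ S : Finset (Fin k), (if S.card = 2 then f S else 0) * xvec k S p
      = ∑ S ∈ Finset.univ.filter (fun S : Finset (Fin k) => S.card = 2), f S * xvec k S p := by
    rw [Finset.sum_filter]
    refine Finset.sum_congr rfl fun S _ => ?_
    by_cases h : S.card = 2 <;> simp [h]
  have hDsub : D ⊆ Finset.univ.filter (fun S : Finset (Fin k) => S.card = 2) := by
    intro S hS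
    rw [hD, Finset.mem_union] at hS
    rcases hS with h | h <;> obtain ⟨m, hm, rfl⟩ := Finset.mem_image.mp h
    · exact Finset.mem_filter.mpr ⟨Finset.mem_univ _, hcard1 m ((hmemM m).mp hm).1⟩
    · exact Finset.mem_filter.mpr ⟨Finset.mem_univ _, hcard2 m ((hmemM m).mp hm).2⟩
  have hvanish : ∀ S ∈ Finset.univ.filter (fun S : Finset (Fin k) => S.card = 2),
      S ∉ D → f S * xvec k S p = 0 := by
    intro S hS hSD
    have hS2 : S.card = 2 := (Finset.mem_filter.mp hS).2
    obtain ⟨x, y, hxy, rfl⟩ := Finset.card_eq_two.mp hS2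
    by_cases hbin : b ∈ ({x, y} : Finset (Fin k))
    · by_cases hcin : c ∈ ({x, y} : Finset (Fin k))
      · -- S = {b, c}
        have hsub : ({b, c} : Finset (Fin k)) ⊆ {x, y} := by
          intro z hz
          rcases Finset.mem_insert.mp hz with h | h
          · rwa [h]
          · rw [Finset.mem_singleton.mp h]; exact hcin
        have heq : ({b, c} : Finset (Fin k)) = {x, y} :=
          Finset.eq_of_subset_of_card_le hsub (by rw [hS2, Finset.card_pair hbc])
        rw [← heq, hf1, zero_mul]
      · -- b ∈ S, c ∉ S : S ∈ D, contradiction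
        exfalso
        apply hSD
        rw [hD, Finset.mem_union]
        left
        rcases Finset.mem_insert.mp hbin with h | h
        · -- b = x, S = {b, y} = {y, b}
          refine Finset.mem_image.mpr ⟨y, (hmemM y).mpr ⟨?_, ?_⟩, ?_⟩
          · exact fun hc => hxy (hc.trans h).symm
          · exact fun hc => hcin (by rw [← hc]; simp)
          · rw [h]; exact Finset.pair_comm y x
        · -- b = y, S = {x, b}
          rw [Finset.mem_singleton] at h
          refine Finset.mem_image.mpr ⟨x, (hmemM x).mpr ⟨?_, ?_⟩, ?_⟩
          · exact fun hc => hxy (hc.trans h)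
          · exact fun hc => hcin (by rw [← hc]; simp)
          · rw [h]
    · by_cases hcin : c ∈ ({x, y} : Finset (Fin k))
      · exfalso
        apply hSD
        rw [hD, Finset.mem_union]
        right
        rcases Finset.mem_insert.mp hcin with h | h
        · refine Finset.mem_image.mpr ⟨y, (hmemM y).mpr ⟨?_, ?_⟩, ?_⟩
          · exact fun hc => hbin (by rw [← hc]; simp)
          · exact fun hc => hxy (hc.trans h).symm
          · rw [h]; exact Finset.pair_comm y x
        · rw [Finset.mem_singleton] at h
          refine Finset.mem_image.mpr ⟨x, (hmemM x).mpr ⟨?_, ?_⟩, ?_⟩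
          · exact fun hc => hbin (by rw [← hc]; simp)
          · exact fun hc => hxy (hc.trans h)
          · rw [h]
      · have hxb : x ≠ b := fun h => hbin (by rw [← h]; simp)
        have hyb : y ≠ b := fun h => hbin (by rw [← h]; simp)
        have hxc : x ≠ c := fun h => hcin (by rw [← h]; simp)
        have hyc : y ≠ c := fun h => hcin (by rw [← h]; simp)
        rw [hf2 x y hxy hxb hxc hyb hyc, zero_mul]
  have hdisj : Disjoint (M.image (fun m => ({m, b} : Finset (Fin k))))
      (M.image (fun m => ({m, c} : Finset (Fin k)))) := by
    rw [Finset.disjoint_left]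
    rintro S h1 h2
    obtain ⟨m, hm, rfl⟩ := Finset.mem_image.mp h1
    obtain ⟨m', hm', heq⟩ := Finset.mem_image.mp h2
    have hcS : c ∈ ({m, b} : Finset (Fin k)) := by rw [← heq]; simp
    rcases Finset.mem_insert.mp hcS with h | h
    · exact ((hmemM m).mp hm).2 h.symm
    · exact hbc (Finset.mem_singleton.mp h).symm
  have hinj1 : ∀ x ∈ M, ∀ y ∈ M, ({x, b} : Finset (Fin k)) = {y, b} → x = y := by
    intro x hx y hy h
    have : x ∈ ({y, b} : Finset (Fin k)) := by rw [← h]; simp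
    rcases Finset.mem_insert.mp this with h' | h'
    · exact h'
    · exact absurd (Finset.mem_singleton.mp h') ((hmemM x).mp hx).1
  have hinj2 : ∀ x ∈ M, ∀ y ∈ M, ({x, c} : Finset (Fin k)) = {y, c} → x = y := by
    intro x hx y hy h
    have : x ∈ ({y, c} : Finset (Fin k)) := by rw [← h]; simp
    rcases Finset.mem_insert.mp this with h' | h'
    · exact h'
    · exact absurd (Finset.mem_singleton.mp h') ((hmemM x).mp hx).2
  rw [step1, ← Finset.sum_subset hDsub hvanish, hD, Finset.sum_union hdisj,
    Finset.sum_image hinj1, Finset.sum_image hinj2, ← Finset.sum_add_distrib]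
  refine Finset.sum_congr rfl fun m hm => ?_
  have hmb : m ≠ b := ((hmemM m).mp hm).1
  have hmc : m ≠ c := ((hmemM m).mp hm).2
  congr 1
  · congr 1
    unfold xvec
    rw [Finset.prod_insert (Finset.notMem_singleton.mpr hmb), Finset.prod_singleton]
  · congr 1
    unfold xvec
    rw [Finset.prod_insert (Finset.notMem_singleton.mpr hmc), Finset.prod_singleton]

lemma classify_boolean (k : ℕ) (u : DesignPoint k → ℚ)
    (hBool : ∀ p, u p = 1 ∨ u p = -1)
    (hsupp : ∀ S : Finset (Fin k), (S = ∅ ∨ 3 ≤ S.card) → ∑ p, xvec k S p * u p = 0) :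
    specialForm k u ∨ (∀ p, u (-p) = u p) ∨ (∀ p, u (-p) = - u p) := by
  classical
  set co : Finset (Fin k) → ℚ := fun S => ∑ q, xvec k S q * u q with hco
  set uo : DesignPoint k → ℚ := fun p => (u p - u (-p))/2 with huo
  set ue : DesignPoint k → ℚ := fun p => (u p + u (-p))/2 with hue
  have hsq : ∀ p, u p * u p = 1 := fun p => by rcases hBool p with h | h <;> rw [h] <;> norm_num
  have hprod : ∀ p, ue p * uo p = 0 := by
    intro p
    have h1 := hsq p
    have h2 := hsq (-p)
    rw [hue, huo]
    simp only
    nlinarith [h1, h2]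
  have hpyth : ∀ p, ue p * ue p + uo p * uo p = 1 := by
    intro p
    have h1 := hsq p
    have h2 := hsq (-p)
    rw [hue, huo]
    simp only
    nlinarith [h1, h2]
  have huo_exp : ∀ p, uo p = ((2:ℚ)^k)⁻¹
      * ∑ S : Finset (Fin k), (if S.card = 1 then co S else 0) * xvec k S p :=
    (parity_exp k u hsupp).1
  have hue_exp : ∀ p, ue p = ((2:ℚ)^k)⁻¹
      * ∑ S : Finset (Fin k), (if S.card = 2 then co S else 0) * xvec k S p :=
    (parity_exp k u hsupp).2
  set α : Fin k → ℚ := fun m => co {m} / 2^k with hα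
  have huo_lin : ∀ p, uo p = ∑ m, α m * ((p m : ℤ) : ℚ) := by
    intro p
    rw [huo_exp p, sum_card_one k co p, Finset.mul_sum]
    refine Finset.sum_congr rfl fun m _ => ?_
    rw [hα]
    simp only
    field_simp
  have hval0 : ∀ p, uo p = 0 ∨ uo p = 1 ∨ uo p = -1 := by
    intro p
    by_cases h0 : uo p = 0
    · exact Or.inl h0
    · right
      have hue0 : ue p = 0 := by
        rcases mul_eq_zero.mp (hprod p) with h | h
        · exact h
        · exact absurd h h0
      have : uo p * uo p = 1 := by
        have := hpyth p
        rw [hue0] at this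
        linarith
      exact mul_self_eq_one_iff.mp this
  rcases linear_classify k α (fun p => by rw [← huo_lin p]; exact hval0 p) with hA | hB | hC
  · -- pure even
    right; left
    intro p
    have : uo p = 0 := by
      rw [huo_lin p]
      exact Finset.sum_eq_zero fun m _ => by rw [hA m, zero_mul]
    rw [huo] at this
    simp only at this
    linarith
  · -- pure odd
    right; right
    obtain ⟨m, hm1, hm0⟩ := hB
    intro p
    have hlin : uo p = α m * ((p m : ℤ) : ℚ) := by
      rw [huo_lin p]
      exact Finset.sum_eq_single m (fun n _ hn => by rw [hm0 n hn, zero_mul])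
        (fun h => absurd (Finset.mem_univ m) h)
    have hne : uo p ≠ 0 := by
      rw [hlin]
      rcases hm1 with h | h <;> rcases cast_unit_pm (p m) with h' | h' <;>
        rw [h, h'] <;> norm_num
    have hue0 : ue p = 0 := by
      rcases mul_eq_zero.mp (hprod p) with h | h
      · exact h
      · exact absurd h hne
    have h1 : u p + u (-p) = 0 := by
      rw [hue] at hue0
      simp only at hue0
      linarith
    linarith
  · -- special case
    left
    obtain ⟨b, c, hbc, hAb, hAc, h0⟩ := hC
    set τ : ℚ := 4 * α b * α c with hτdef
    have hτ : τ = 1 ∨ τ = -1 := by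
      rcases hAb with h | h <;> rcases hAc with h' | h' <;> rw [hτdef, h, h'] <;> norm_num
    have hττ : τ * τ = 1 := by rcases hτ with h | h <;> rw [h] <;> norm_num
    have hAb2 : α b * α b = 1/4 := by rcases hAb with h | h <;> rw [h] <;> norm_num
    have hAc2 : α c * α c = 1/4 := by rcases hAc with h | h <;> rw [h] <;> norm_num
    have hcτ : α c * τ = α b := by
      rcases hAb with h | h <;> rcases hAc with h' | h' <;> rw [hτdef, h, h'] <;> norm_num
    have huo_bc : ∀ p, uo p = α b * ((p b : ℤ) : ℚ) + α c * ((p c : ℤ) : ℚ) := by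
      intro p
      rw [huo_lin p]
      have hpair := Finset.sum_pair (f := fun m => α m * ((p m : ℤ) : ℚ)) hbc
      rw [← hpair]
      refine (Finset.sum_subset (Finset.subset_univ _) ?_).symm
      intro x _ hx
      have hxb : x ≠ b := fun h => hx (by rw [h]; simp)
      have hxc : x ≠ c := fun h => hx (by rw [h]; simp)
      rw [h0 x hxb hxc, zero_mul]
    have hZ : ∀ p, ((p c : ℤ) : ℚ) = -τ * ((p b : ℤ) : ℚ) → uo p = 0 := by
      intro p hp
      rw [huo_bc p, hp]
      have : α c * (-τ * ((p b : ℤ) : ℚ)) = -(α b * ((p b : ℤ) : ℚ)) := by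
        linear_combination (-((p b : ℤ) : ℚ)) * hcτ
      rw [this]; ring
    have hZ' : ∀ p, uo p = 0 → ((p c : ℤ) : ℚ) = -τ * ((p b : ℤ) : ℚ) := by
      intro p hp
      rw [huo_bc p] at hp
      have h4 : τ * ((p b : ℤ) : ℚ) + ((p c : ℤ) : ℚ) = 0 := by
        have hexp : 4 * α c * (α b * ((p b : ℤ) : ℚ) + α c * ((p c : ℤ) : ℚ))
            = τ * ((p b : ℤ) : ℚ) + 4 * (α c * α c) * ((p c : ℤ) : ℚ) := by
          rw [hτdef]; ring
        rw [hp, hAc2] at hexp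
        norm_num at hexp
        linarith [hexp]
      linarith
    have hkey : ∀ p, ue p = -τ * (((p b : ℤ) : ℚ) * ((p c : ℤ) : ℚ)) * ue p := by
      intro p
      by_cases h0p : uo p = 0
      · have hy := hZ' p h0p
        have hx := cast_unit_sq (p b)
        have h1 : -τ * (((p b : ℤ) : ℚ) * ((p c : ℤ) : ℚ)) = 1 := by
          rw [hy]
          calc -τ * (((p b : ℤ) : ℚ) * (-τ * ((p b : ℤ) : ℚ)))
              = (τ * τ) * (((p b : ℤ) : ℚ) * ((p b : ℤ) : ℚ)) := by ring
            _ = 1 := by rw [hττ, hx]; norm_num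
        rw [h1, one_mul]
      · have : ue p = 0 := by
          rcases mul_eq_zero.mp (hprod p) with h | h
          · exact h
          · exact absurd h h0p
        rw [this, mul_zero]
    -- coefficient consequences
    set ce : Finset (Fin k) → ℚ := fun T => ∑ p, xvec k T p * ue p with hcedef
    have hce1 : ∀ T : Finset (Fin k), ce T = if T.card = 2 then co T else 0 := by
      intro T
      rw [hcedef]
      simp only
      rw [Finset.sum_congr rfl fun p _ => by rw [hue_exp p]]
      exact evaluation k (fun S => if S.card = 2 then co S else 0) T
    have hce2 : ∀ T : Finset (Fin k), ce T = -τ * ce (T ∆ ({b, c} : Finset (Fin k))) := by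
      intro T
      rw [hcedef]
      simp only
      rw [Finset.sum_congr rfl fun p _ => by rw [hkey p]]
      rw [Finset.mul_sum]
      refine Finset.sum_congr rfl fun p _ => ?_
      have hx : ((p b : ℤ) : ℚ) * ((p c : ℤ) : ℚ) = xvec k {b, c} p := by
        unfold xvec
        rw [Finset.prod_insert (Finset.notMem_singleton.mpr hbc), Finset.prod_singleton]
      calc xvec k T p * (-τ * (((p b : ℤ) : ℚ) * ((p c : ℤ) : ℚ)) * ue p)
          = -τ * ((xvec k T p * xvec k {b, c} p) * ue p) := by rw [hx]; ring
        _ = -τ * (xvec k (T ∆ ({b, c} : Finset (Fin k))) p * ue p) := by rw [xvec_mul]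
    have hbc0 : co {b, c} = 0 := by
      have h1 := hce2 {b, c}
      rw [symmDiff_self] at h1
      have h2 : ce (⊥ : Finset (Fin k)) = 0 := by
        rw [hce1]
        simp
      rw [h2, mul_zero] at h1
      have h3 := hce1 {b, c}
      rw [h1] at h3
      rw [if_pos (Finset.card_pair hbc)] at h3
      exact h3.symm
    have hpairc : ∀ m : Fin k, m ≠ b → m ≠ c → co {m, c} = -τ * co {m, b} := by
      intro m hmb hmc
      have hsd : ({m, c} : Finset (Fin k)) ∆ ({b, c} : Finset (Fin k)) = {m, b} := by
        ext z
        simp only [Finset.mem_symmDiff, Finset.mem_insert, Finset.mem_singleton]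
        constructor
        · rintro (⟨h1, h2⟩ | ⟨h1, h2⟩)
          · push_neg at h2
            rcases h1 with h | h
            · exact Or.inl h
            · exact absurd h h2.2
          · push_neg at h2
            rcases h1 with h | h
            · exact Or.inr h
            · exact absurd h h2.2
        · rintro (h | h)
          · subst h
            exact Or.inl ⟨Or.inl rfl, by push_neg; exact ⟨hmb, hmc⟩⟩
          · subst h
            exact Or.inr ⟨Or.inl rfl, by push_neg; exact ⟨fun hh => hmb hh.symm, hbc⟩⟩
      have h1 := hce2 {m, c}
      rw [hsd] at h1
      rw [hce1, hce1, if_pos (Finset.card_pair hmc), if_pos (Finset.card_pair hmb)] at h1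
      exact h1
    have hmn0 : ∀ m n : Fin k, m ≠ n → m ≠ b → m ≠ c → n ≠ b → n ≠ c → co {m, n} = 0 := by
      intro m n hmn hmb hmc hnb hnc
      have hdisj : Disjoint ({m, n} : Finset (Fin k)) ({b, c} : Finset (Fin k)) := by
        rw [Finset.disjoint_left]
        intro z hz hz2
        rcases Finset.mem_insert.mp hz with h | h
        · subst h
          rcases Finset.mem_insert.mp hz2 with h' | h'
          · exact hmb h'
          · exact hmc (Finset.mem_singleton.mp h')
        · rw [Finset.mem_singleton] at h
          subst h
          rcases Finset.mem_insert.mp hz2 with h' | h'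
          · exact hnb h'
          · exact hnc (Finset.mem_singleton.mp h')
      have hsd : ({m, n} : Finset (Fin k)) ∆ ({b, c} : Finset (Fin k))
          = ({m, n} : Finset (Fin k)) ∪ ({b, c} : Finset (Fin k)) := hdisj.symmDiff_eq_sup
      have hcard4 : (({m, n} : Finset (Fin k)) ∪ ({b, c} : Finset (Fin k))).card = 4 := by
        rw [Finset.card_union_of_disjoint hdisj, Finset.card_pair hmn, Finset.card_pair hbc]
      have h1 := hce2 {m, n}
      rw [hsd] at h1
      rw [hce1, hce1, if_pos (Finset.card_pair hmn), if_neg (by rw [hcard4]; norm_num)] at h1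
      rw [h1, mul_zero]
    -- resummation
    set γ : Fin k → ℚ := fun m => if m = b ∨ m = c then 0 else co {m, b} / 2^k with hγ
    have hueL : ∀ p, ue p = (((p b : ℤ) : ℚ) - τ * ((p c : ℤ) : ℚ)) * ∑ m, γ m * ((p m : ℤ) : ℚ) := by
      intro p
      rw [hue_exp p, sum_card_two k co b c hbc hbc0 hmn0 p]
      have step : ∀ m ∈ Finset.univ.filter (fun m : Fin k => ¬(m = b ∨ m = c)),
          co {m, b} * (((p m : ℤ):ℚ) * ((p b : ℤ):ℚ)) + co {m, c} * (((p m : ℤ):ℚ) * ((p c : ℤ):ℚ))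
          = (2:ℚ)^k * ((((p b : ℤ) : ℚ) - τ * ((p c : ℤ) : ℚ)) * (γ m * ((p m : ℤ) : ℚ))) := by
        intro m hm
        have hm' : ¬(m = b ∨ m = c) := (Finset.mem_filter.mp hm).2
        push_neg at hm'
        rw [hpairc m hm'.1 hm'.2, hγ]
        simp only [if_neg ((Finset.mem_filter.mp hm).2)]
        field_simp
        ring
      rw [Finset.sum_congr rfl step, ← Finset.mul_sum]
      have hfin : ∑ m ∈ Finset.univ.filter (fun m : Fin k => ¬(m = b ∨ m = c)),
          ((((p b : ℤ) : ℚ) - τ * ((p c : ℤ) : ℚ)) * (γ m * ((p m : ℤ) : ℚ)))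
          = (((p b : ℤ) : ℚ) - τ * ((p c : ℤ) : ℚ)) * ∑ m, γ m * ((p m : ℤ) : ℚ) := by
        rw [← Finset.mul_sum]
        congr 1
        apply Finset.sum_subset (Finset.filter_subset _ _)
        intro x _ hx
        rw [Finset.mem_filter] at hx
        push_neg at hx
        have : γ x = 0 := by
          rw [hγ]
          simp only [if_pos (hx (Finset.mem_univ x))]
        rw [this, zero_mul]
      rw [hfin]
      field_simp
  -- values of the linear part
    have hLval : ∀ q : DesignPoint k, (2 * ∑ m, γ m * ((q m : ℤ) : ℚ)) = 1
        ∨ (2 * ∑ m, γ m * ((q m : ℤ) : ℚ)) = -1 := by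
      intro q
      set w : ℤˣ := if τ = 1 then -(q b) else q b with hw
      set q' : DesignPoint k := Function.update q c w with hq'
      have hq'b : q' b = q b := by
        rw [hq']; exact Function.update_of_ne hbc _ _
      have hq'c : ((q' c : ℤ) : ℚ) = -τ * ((q b : ℤ) : ℚ) := by
        rw [hq']
        rw [Function.update_self]
        rcases hτ with h | h
        · rw [hw, if_pos h, h]
          push_cast [Units.val_neg]
          ring
        · rw [hw, if_neg (by rw [h]; norm_num), h]
          ring
      have hZq : uo q' = 0 := hZ q' (by rw [hq'c, hq'b])
      have hue1 : ue q' * ue q' = 1 := by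
        have := hpyth q'
        rw [hZq] at this
        linarith
      have hLq : ∑ m, γ m * ((q' m : ℤ) : ℚ) = ∑ m, γ m * ((q m : ℤ) : ℚ) := by
        refine Finset.sum_congr rfl fun m _ => ?_
        by_cases hmc : m = c
        · subst hmc
          have hz : γ m = 0 := by rw [hγ]; simp
          rw [hz, zero_mul, zero_mul]
        · rw [hq', Function.update_of_ne hmc]
      have hx := cast_unit_sq (q b)
      have hstep : ue q' = ((q b : ℤ) : ℚ) * (2 * ∑ m, γ m * ((q m : ℤ) : ℚ)) := by
        rw [hueL q', hq'c, hLq, hq'b]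
        linear_combination (∑ m, γ m * ((q m : ℤ) : ℚ)) * ((q b : ℤ) : ℚ) * hττ
      have h2L : (2 * ∑ m, γ m * ((q m : ℤ) : ℚ)) * (2 * ∑ m, γ m * ((q m : ℤ) : ℚ)) = 1 := by
        have h2 : (((q b : ℤ) : ℚ) * (2 * ∑ m, γ m * ((q m : ℤ) : ℚ)))
            * (((q b : ℤ) : ℚ) * (2 * ∑ m, γ m * ((q m : ℤ) : ℚ))) = 1 := by
          rw [← hstep]; exact hue1
        linear_combination h2 - ((2 * ∑ m, γ m * ((q m : ℤ) : ℚ))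
          * (2 * ∑ m, γ m * ((q m : ℤ) : ℚ))) * hx
      exact mul_self_eq_one_iff.mp h2L
    have hlin2 := linear_classify k (fun m => 2 * γ m) (fun p => by
      have hmm : ∑ m, (2 * γ m) * ((p m : ℤ) : ℚ) = 2 * ∑ m, γ m * ((p m : ℤ) : ℚ) := by
        rw [Finset.mul_sum]
        exact Finset.sum_congr rfl fun m _ => by ring
      rw [hmm]
      rcases hLval p with h | h
      · exact Or.inr (Or.inl h)
      · exact Or.inr (Or.inr h))
    rcases hlin2 with hA2 | hB2 | hC2
    · exfalso
      have hz : ∑ m, γ m * (((((fun _ => 1 : DesignPoint k)) m : ℤ)) : ℚ) = 0 :=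
        Finset.sum_eq_zero fun m _ => by
          have h' : γ m = 0 := by have h'' := hA2 m; linarith
          rw [h', zero_mul]
      rcases hLval (fun _ => 1) with h | h <;> rw [hz] at h <;> norm_num at h
    · -- single coefficient : the special form
      obtain ⟨a, ha1, ha0⟩ := hB2
      have hγa : γ a = 1/2 ∨ γ a = -(1/2) := by
        rcases ha1 with h | h
        · left; linarith
        · right; linarith
      have hab : a ≠ b := by
        intro h
        subst h
        have hzz : γ a = 0 := by rw [hγ]; simp
        rcases hγa with h' | h' <;> rw [hzz] at h' <;> norm_num at h'
      have hac : a ≠ c := by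
        intro h
        subst h
        have hzz : γ a = 0 := by rw [hγ]; simp
        rcases hγa with h' | h' <;> rw [hzz] at h' <;> norm_num at h'
      have hγ0 : ∀ n, n ≠ a → γ n = 0 := fun n hn => by
        have h'' := ha0 n hn; linarith
      have hLa : ∀ p : DesignPoint k, ∑ m, γ m * ((p m : ℤ) : ℚ) = γ a * ((p a : ℤ) : ℚ) :=
        fun p => Finset.sum_eq_single a (fun n _ hn => by rw [hγ0 n hn, zero_mul])
          (fun h => absurd (Finset.mem_univ a) h)
      refine ⟨a, b, c, hab, hac, hbc, γ a, -τ * γ a, α b, α c, hγa, ?_, hAb, hAc, ?_⟩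
      · rcases hτ with h | h <;> rcases hγa with h' | h' <;> rw [h, h'] <;> norm_num
      · funext p
        have h1 : u p = ue p + uo p := by rw [hue, huo]; simp only; ring
        rw [h1, hueL p, hLa p, huo_bc p]
        have hxab : xvec k {a, b} p = ((p a : ℤ):ℚ) * ((p b : ℤ):ℚ) := by
          unfold xvec
          rw [Finset.prod_insert (Finset.notMem_singleton.mpr hab), Finset.prod_singleton]
        have hxac : xvec k {a, c} p = ((p a : ℤ):ℚ) * ((p c : ℤ):ℚ) := by
          unfold xvec
          rw [Finset.prod_insert (Finset.notMem_singleton.mpr hac), Finset.prod_singleton]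
        have hxb : xvec k {b} p = ((p b : ℤ):ℚ) := by
          unfold xvec; rw [Finset.prod_singleton]
        have hxc : xvec k {c} p = ((p c : ℤ):ℚ) := by
          unfold xvec; rw [Finset.prod_singleton]
        rw [hxab, hxac, hxb, hxc]
        ring
    · -- two halves: impossible
      exfalso
      obtain ⟨b₁, c₁, hb1c1, hv1, hv2, hz12⟩ := hC2
      have hq1 : γ b₁ = 1/4 ∨ γ b₁ = -(1/4) := by
        rcases hv1 with h | h
        · left; linarith
        · right; linarith
      have hq2 : γ c₁ = 1/4 ∨ γ c₁ = -(1/4) := by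
        rcases hv2 with h | h
        · left; linarith
        · right; linarith
      have hz' : ∀ n, n ≠ b₁ → n ≠ c₁ → γ n = 0 := fun n h1 h2 => by
        have h'' := hz12 n h1 h2; linarith
      set w : ℤˣ := if γ c₁ = γ b₁ then -1 else 1 with hwd
      set pp : DesignPoint k := fun m => if m = c₁ then w else 1 with hpp
      have hppb : ((pp b₁ : ℤ) : ℚ) = 1 := by
        rw [hpp]; simp [hb1c1]
      have hppc : pp c₁ = w := by rw [hpp]; simp
      have hsum : ∑ m, γ m * ((pp m : ℤ):ℚ) = γ b₁ * ((pp b₁:ℤ):ℚ) + γ c₁ * ((pp c₁:ℤ):ℚ) := by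
        have hpair := Finset.sum_pair (f := fun m => γ m * ((pp m : ℤ) : ℚ)) hb1c1
        rw [← hpair]
        refine (Finset.sum_subset (Finset.subset_univ _) ?_).symm
        intro x _ hx
        have hxb : x ≠ b₁ := fun h => hx (by rw [h]; simp)
        have hxc : x ≠ c₁ := fun h => hx (by rw [h]; simp)
        rw [hz' x hxb hxc, zero_mul]
      by_cases hw : γ c₁ = γ b₁
      · have hcw : ((pp c₁ : ℤ):ℚ) = -1 := by
          rw [hppc, hwd, if_pos hw]; simp
        have h0sum : γ b₁ * ((pp b₁:ℤ):ℚ) + γ c₁ * ((pp c₁:ℤ):ℚ) = 0 := by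
          rw [hppb, hcw, hw]; ring
        rcases hLval pp with h | h <;> rw [hsum, h0sum] at h <;> norm_num at h
      · have hcw : ((pp c₁ : ℤ):ℚ) = 1 := by
          rw [hppc, hwd, if_neg hw]; simp
        have hne : γ c₁ = - γ b₁ := by
          rcases hq1 with h1 | h1 <;> rcases hq2 with h2 | h2
          · exact absurd (h2.trans h1.symm) hw
          · rw [h1, h2] <;> norm_num
          · rw [h1, h2] <;> norm_num
          · exact absurd (h2.trans h1.symm) hw
        have h0sum : γ b₁ * ((pp b₁:ℤ):ℚ) + γ c₁ * ((pp c₁:ℤ):ℚ) = 0 := by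
          rw [hppb, hcw, hne]; ring
        rcases hLval pp with h | h <;> rw [hsum, h0sum] at h <;> norm_num at h

lemma xvec_pm (k : ℕ) (S : Finset (Fin k)) (p : DesignPoint k) :
    xvec k S p = 1 ∨ xvec k S p = -1 := by
  apply mul_self_eq_one_iff.mp
  unfold xvec
  rw [← Finset.prod_mul_distrib]
  exact Finset.prod_eq_one fun i _ => cast_unit_sq (p i)

lemma xvec_pair (k : ℕ) (a b : Fin k) (hab : a ≠ b) (p : DesignPoint k) :
    xvec k {a, b} p = ((p a : ℤ) : ℚ) * ((p b : ℤ) : ℚ) := by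
  unfold xvec
  rw [Finset.prod_insert (Finset.notMem_singleton.mpr hab), Finset.prod_singleton]

lemma xvec_single (k : ℕ) (b : Fin k) (p : DesignPoint k) :
    xvec k {b} p = ((p b : ℤ) : ℚ) := by
  unfold xvec; rw [Finset.prod_singleton]

lemma permVec_mul (k : ℕ) (π σ : Equiv.Perm (DesignPoint k)) (v : DesignPoint k → ℚ) :
    permVec k (π * σ) v = permVec k π (permVec k σ v) := by
  funext p
  simp [permVec, mul_inv_rev]

lemma GLP_one (k N t : ℕ) : (1 : Equiv.Perm (DesignPoint k)) ∈ GLP k N t := by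
  intro f hf
  have : permVec k 1 f = f := by funext p; simp [permVec]
  rwa [this]

lemma GLP_mul (k N t : ℕ) (π σ : Equiv.Perm (DesignPoint k))
    (hπ : π ∈ GLP k N t) (hσ : σ ∈ GLP k N t) : π * σ ∈ GLP k N t := by
  intro f hf
  rw [permVec_mul]
  exact hπ _ (hσ _ hf)

lemma GLP_pow (k N t : ℕ) (g : Equiv.Perm (DesignPoint k)) (hg : g ∈ GLP k N t) :
    ∀ n : ℕ, g ^ n ∈ GLP k N t := by
  intro n
  induction n with
  | zero => simpa using GLP_one k N t
  | succ n ih => rw [pow_succ]; exact GLP_mul k N t _ _ ih hg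

lemma GLP_inv (k N t : ℕ) (g : Equiv.Perm (DesignPoint k)) (hg : g ∈ GLP k N t) :
    g⁻¹ ∈ GLP k N t := by
  have h1 : g ^ orderOf g = 1 := pow_orderOf_eq_one g
  have hpos : 0 < orderOf g := orderOf_pos g
  have h2 : g * g ^ (orderOf g - 1) = 1 := by
    rw [← pow_succ', Nat.sub_add_cancel hpos]
    exact h1
  have h3 : g⁻¹ = g ^ (orderOf g - 1) := inv_eq_of_mul_eq_one_right h2
  rw [h3]
  exact GLP_pow k N t g hg _

lemma feas_const (k N : ℕ) : (fun _ : DesignPoint k => (N:ℚ)/2^k) ∈ feas k N 2 := by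
  refine ⟨fun p => by positivity, ?_, ?_⟩
  · rw [Finset.sum_const, Finset.card_univ, Fintype.card_fun]
    simp only [nsmul_eq_mul]
    have : (Fintype.card ℤˣ : ℕ) = 2 := by decide
    rw [this]
    norm_num
    field_simp
  · intro S hS _
    rw [← Finset.sum_mul, sum_xvec k S hS, zero_mul]

lemma feas_plus (k N : ℕ) (S₀ : Finset (Fin k)) (h3 : 3 ≤ S₀.card) :
    (fun p => (N:ℚ)/2^k * (1 + xvec k S₀ p)) ∈ feas k N 2 := by
  have hS0 : S₀ ≠ ∅ := by
    intro h; rw [h] at h3; simp at h3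
  refine ⟨?_, ?_, ?_⟩
  · intro p
    show 0 ≤ (N:ℚ)/2^k * (1 + xvec k S₀ p)
    rcases xvec_pm k S₀ p with h | h <;> rw [h]
    · positivity
    · norm_num
  · have : ∀ p : DesignPoint k, (N:ℚ)/2^k * (1 + xvec k S₀ p)
        = (N:ℚ)/2^k + (N:ℚ)/2^k * xvec k S₀ p := fun p => by ring
    rw [Finset.sum_congr rfl fun p _ => this p, Finset.sum_add_distrib, ← Finset.mul_sum,
      sum_xvec k S₀ hS0, mul_zero, add_zero, Finset.sum_const, Finset.card_univ, Fintype.card_fun]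
    have h2 : (Fintype.card ℤˣ : ℕ) = 2 := by decide
    rw [h2]
    simp only [nsmul_eq_mul]
    norm_num
    field_simp
  · intro T hT hTc
    have hTS : T ≠ S₀ := by
      intro h; rw [h] at hTc; omega
    have : ∀ p : DesignPoint k, xvec k T p * ((N:ℚ)/2^k * (1 + xvec k S₀ p))
        = (N:ℚ)/2^k * xvec k T p + (N:ℚ)/2^k * (xvec k T p * xvec k S₀ p) := fun p => by ring
    rw [Finset.sum_congr rfl fun p _ => this p, Finset.sum_add_distrib, ← Finset.mul_sum,
      ← Finset.mul_sum, sum_xvec k T hT, xvec_orth k T S₀, if_neg hTS]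
    ring

lemma image_bool (k : ℕ) (g : Equiv.Perm (DesignPoint k)) (S : Finset (Fin k)) (p : DesignPoint k) :
    permVec k g (xvec k S) p = 1 ∨ permVec k g (xvec k S) p = -1 :=
  xvec_pm k S (g⁻¹ p)

lemma image_support (k N : ℕ) (hN : 1 ≤ N) (g : Equiv.Perm (DesignPoint k))
    (hg : g ∈ GLP k N 2) (i : Fin k) :
    ∀ S : Finset (Fin k), (S = ∅ ∨ 3 ≤ S.card) →
      ∑ p, xvec k S p * (permVec k g (xvec k {i})) p = 0 := by
  have hNq : ((N:ℚ)/2^k) ≠ 0 := by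
    have : (0:ℚ) < N := by exact_mod_cast Nat.lt_of_lt_of_le Nat.zero_lt_one hN
    positivity
  set u : DesignPoint k → ℚ := permVec k g (xvec k {i}) with hu
  have hre : ∀ f : DesignPoint k → ℚ, ∑ p, xvec k {i} p * f (g p) = ∑ q, u q * f q := by
    intro f
    refine Fintype.sum_equiv g _ _ fun p => ?_
    have : u (g p) = xvec k {i} p := by
      rw [hu]
      simp [permVec]
    rw [this]
  have hginv := GLP_inv k N 2 g hg
  have key : ∀ f ∈ feas k N 2, ∑ q, u q * f q = 0 := by
    intro f hf
    have hmem := hginv f hf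
    have hcon := hmem.2.2 {i} (Finset.singleton_ne_empty i) (by simp)
    have heq : ∀ p, (permVec k g⁻¹ f) p = f (g p) := fun p => by simp [permVec]
    rw [← hre f, ← hcon]
    exact Finset.sum_congr rfl fun p _ => by rw [heq p]
  have hsum0 : ∑ q, u q = 0 := by
    have h1 := key _ (feas_const k N)
    rw [← Finset.sum_mul] at h1
    rcases mul_eq_zero.mp h1 with h | h
    · exact h
    · exact absurd h hNq
  intro S hS
  rcases hS with h | h
  · -- S = ∅
    subst h
    have : ∀ p : DesignPoint k, xvec k ∅ p * u p = u p := fun p => by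
      unfold xvec; rw [Finset.prod_empty, one_mul]
    rw [Finset.sum_congr rfl fun p _ => this p]
    exact hsum0
  · -- 3 ≤ card S
    have h1 := key _ (feas_plus k N S h)
    have h2 : ∀ q, u q * ((N:ℚ)/2^k * (1 + xvec k S q))
        = (N:ℚ)/2^k * u q + (N:ℚ)/2^k * (xvec k S q * u q) := fun q => by ring
    rw [Finset.sum_congr rfl fun q _ => h2 q, Finset.sum_add_distrib, ← Finset.mul_sum,
      ← Finset.mul_sum, hsum0, mul_zero, zero_add] at h1
    rcases mul_eq_zero.mp h1 with h' | h'
    · exact absurd h' hNq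
    · exact h'

/-- For `t = 2` and `g ∈ G^LP`: if no main effect is sent by `g` to
the special form `±(1/2)x_{a,b} ± (1/2)x_{a,c} ± (1/2)x_b ± (1/2)x_c`, then no
element of the basis `B = {x_T : |T| ≤ 2}` is sent to that form. -/
theorem strength_two_no_main_effect_special_form
    (k N : ℕ) (hk : 2 ≤ k) (hN : 1 ≤ N)
    (g : Equiv.Perm (DesignPoint k)) (hg : g ∈ GLP k N 2)
    (hmain : ∀ i : Fin k, ¬ specialForm k (permVec k g (xvec k {i}))) :
    ∀ T : Finset (Fin k), T.card ≤ 2 →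
      ¬ specialForm k (permVec k g (xvec k T)) := by
  classical
  intro T hT
  have hcases : T.card = 0 ∨ T.card = 1 ∨ T.card = 2 := by omega
  rcases hcases with h0 | h1 | h2
  · -- T = ∅ : image is the all-ones vector
    rw [Finset.card_eq_zero] at h0
    subst h0
    rintro ⟨a, b, c, hab, hac, hbc, e1, e2, e3, e4, he1, he2, he3, he4, heq⟩
    have hone : ∀ p, permVec k g (xvec k ∅) p = 1 := fun p => by
      simp [permVec, xvec]
    set p0 : DesignPoint k := fun _ => 1 with hp0def
    set p3 : DesignPoint k := Function.update (Function.update p0 b (-1)) c (-1) with hp3def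
    have h1 := congrFun heq p0
    have h2 := congrFun heq p3
    rw [hone p0] at h1
    rw [hone p3] at h2
    rw [xvec_pair k a b hab, xvec_pair k a c hac, xvec_single, xvec_single] at h1
    rw [xvec_pair k a b hab, xvec_pair k a c hac, xvec_single, xvec_single] at h2
    simp only [hp0def, Units.val_one, Int.cast_one] at h1
    simp only [hp3def, hp0def, Function.update_of_ne hac, Function.update_of_ne hab,
      Function.update_of_ne hbc, Function.update_self, Units.val_one, Units.val_neg,
      Int.cast_one, Int.cast_neg] at h2
    nlinarith [h1, h2]
  · -- T = {i}
    obtain ⟨i, rfl⟩ := Finset.card_eq_one.mp h1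
    exact hmain i
  · -- T = {i, j}
    obtain ⟨i, j, hij, rfl⟩ := Finset.card_eq_two.mp h2
    rintro ⟨a, b, c, hab, hac, hbc, e1, e2, e3, e4, he1, he2, he3, he4, heq⟩
    set u : DesignPoint k → ℚ := permVec k g (xvec k {i}) with hudef
    set w : DesignPoint k → ℚ := permVec k g (xvec k {j}) with hwdef
    have hu := classify_boolean k u (image_bool k g {i}) (image_support k N hN g hg i)
    have hw := classify_boolean k w (image_bool k g {j}) (image_support k N hN g hg j)
    have hu' : (∀ p, u (-p) = u p) ∨ (∀ p, u (-p) = -u p) := by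
      rcases hu with h | h
      · exact absurd h (hmain i)
      · exact h
    have hw' : (∀ p, w (-p) = w p) ∨ (∀ p, w (-p) = -w p) := by
      rcases hw with h | h
      · exact absurd h (hmain j)
      · exact h
    set V : DesignPoint k → ℚ := permVec k g (xvec k {i, j}) with hVdef
    have hmul : ∀ p, V p = u p * w p := by
      intro p
      rw [hVdef, hudef, hwdef]
      simp only [permVec]
      rw [xvec_pair k i j hij, xvec_single, xvec_single]
    have hpar : (∀ p, V (-p) = V p) ∨ (∀ p, V (-p) = -V p) := by
      rcases hu' with h | h <;> rcases hw' with h' | h'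
      · left; intro p; rw [hmul, hmul, h p, h' p]
      · right; intro p; rw [hmul, hmul, h p, h' p]; ring
      · right; intro p; rw [hmul, hmul, h p, h' p]; ring
      · left; intro p; rw [hmul, hmul, h p, h' p]; ring
    set p0 : DesignPoint k := fun _ => 1 with hp0def
    set p2 : DesignPoint k := Function.update p0 b (-1) with hp2def
    have hE0 := congrFun heq p0
    have hEn0 := congrFun heq (-p0)
    have hE2 := congrFun heq p2
    have hEn2 := congrFun heq (-p2)
    rw [xvec_pair k a b hab, xvec_pair k a c hac, xvec_single, xvec_single] at hE0 hEn0 hE2 hEn2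
    simp only [hp0def, Units.val_one, Int.cast_one] at hE0
    simp only [hp0def, Pi.neg_apply, Units.val_neg, Units.val_one, Int.cast_neg,
      Int.cast_one] at hEn0
    simp only [hp2def, hp0def, Function.update_of_ne hab, Function.update_of_ne (Ne.symm hbc),
      Function.update_self, Units.val_one, Units.val_neg, Int.cast_one, Int.cast_neg] at hE2
    simp only [hp2def, hp0def, Pi.neg_apply, Function.update_of_ne hab,
      Function.update_of_ne (Ne.symm hbc), Function.update_self, Units.val_one, Units.val_neg,
      Int.cast_one, Int.cast_neg, neg_neg] at hEn2
    rcases hpar with hs | hs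
    · have q1 : V (-p0) = V p0 := hs p0
      have q2 : V (-p2) = V p2 := hs p2
      rw [hE0, hEn0] at q1
      rw [hE2, hEn2] at q2
      rcases he3 with h | h <;> rw [h] at q1 q2 <;> nlinarith [q1, q2]
    · have q1 : V (-p0) = -V p0 := hs p0
      have q2 : V (-p2) = -V p2 := hs p2
      rw [hE0, hEn0] at q1
      rw [hE2, hEn2] at q2
      rcases he1 with h | h <;> rw [h] at q1 q2 <;> nlinarith [q1, q2]
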